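/- The kernel of the symmetric Gauss-Epple homomorphism equals the kernel of the Gauss-Epple homomorphism: ker ϖ = ker ς as subgroups of B_n. -/
import Mathlib


/-- The braid relations. -/
def braidRels (n : ℕ) : Set (FreeGroup (Fin (n - 1))) :=
  {r | (∃ i j : Fin (n - 1), (j : ℕ) = (i : ℕ) + 1 ∧
        r = .of i * .of j * .of i * (.of j * .of i * .of j)⁻¹) ∨
       (∃ i j : Fin (n - 1), (i : ℕ) + 2 ≤ (j : ℕ) ∧
        r = .of i * .of j * (.of j * .of i)⁻¹)}

/-- The braid group `B_n`. -/
abbrev BraidGroup (n : ℕ) := PresentedGroup (braidRels n)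

/-- The Artin generator `σ_{k+1}` (0-based index `k`). -/
def braidGen {n : ℕ} (i : Fin (n - 1)) : BraidGroup n := PresentedGroup.of i

/-- The strand index `k`, viewed inside `Fin n`. -/
def lo {n : ℕ} (k : Fin (n - 1)) : Fin n := ⟨k, by have := k.isLt; omega⟩

/-- The strand index `k + 1`, viewed inside `Fin n`. -/
def hi {n : ℕ} (k : Fin (n - 1)) : Fin n := ⟨(k : ℕ) + 1, by have := k.isLt; omega⟩

/-- The action of `S_n` on `ℤ^n` by permuting coordinates: `(π·ℓ)(i) = ℓ(π⁻¹ i)`. -/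
def permAct (n : ℕ) : Equiv.Perm (Fin n) →* MulAut (Multiplicative (Fin n → ℤ)) where
  toFun π :=
    { toFun := fun ℓ => Multiplicative.ofAdd fun i => Multiplicative.toAdd ℓ (π⁻¹ i)
      invFun := fun ℓ => Multiplicative.ofAdd fun i => Multiplicative.toAdd ℓ (π i)
      left_inv := fun ℓ => by simp
      right_inv := fun ℓ => by simp
      map_mul' := fun ℓ ℓ' => rfl }
  map_one' := by ext ℓ; simp
  map_mul' := fun π ρ => by
    ext ℓ
    simp [Equiv.Perm.mul_apply]

/-- The semidirect product `ℤ^n ⋊ S_n`. -/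
abbrev GEGroup (n : ℕ) :=
  SemidirectProduct (Multiplicative (Fin n → ℤ)) (Equiv.Perm (Fin n)) (permAct n)

/-- The value `(e_k, (k, k+1))` of the Gauss-Epple homomorphism `ς` on the generator `σ_k`. -/
def ςGen {n : ℕ} (k : Fin (n - 1)) : GEGroup n :=
  ⟨Multiplicative.ofAdd (Pi.single (lo k) 1), Equiv.swap (lo k) (hi k)⟩

/-- The value `(e_k + e_{k+1}, (k, k+1))` of the symmetric Gauss-Epple homomorphism `ϖ`
on the generator `σ_k`. -/
def ϖGen {n : ℕ} (k : Fin (n - 1)) : GEGroup n :=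
  ⟨Multiplicative.ofAdd (Pi.single (lo k) 1 + Pi.single (hi k) 1),
    Equiv.swap (lo k) (hi k)⟩

-- auxiliary
def GEdelta {n : ℕ} (π : Equiv.Perm (Fin n)) : Fin n → ℤ :=
  fun i => ((π⁻¹ i : Fin n) : ℤ) - (i : ℤ)

lemma GEdelta_one {n : ℕ} : GEdelta (1 : Equiv.Perm (Fin n)) = 0 := by
  funext i; simp [GEdelta]

lemma GEdelta_mul {n : ℕ} (π ρ : Equiv.Perm (Fin n)) :
    GEdelta (π * ρ) = GEdelta π + fun i => GEdelta ρ (π⁻¹ i) := by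
  funext i
  simp [GEdelta, mul_inv_rev, Equiv.Perm.mul_apply]

def GEPhi (n : ℕ) : GEGroup n →* GEGroup n where
  toFun x := ⟨Multiplicative.ofAdd ((2 : ℤ) • Multiplicative.toAdd x.left - GEdelta x.right),
    x.right⟩
  map_one' := by
    apply SemidirectProduct.ext
    · show Multiplicative.ofAdd ((2:ℤ) • Multiplicative.toAdd (1 : Multiplicative (Fin n → ℤ))
          - GEdelta (1 : Equiv.Perm (Fin n))) = 1
      simp [GEdelta_one]
    · rfl
  map_mul' x y := by
    apply SemidirectProduct.ext
    · show Multiplicative.ofAdd ((2:ℤ) • Multiplicative.toAdd ((x*y).left) - GEdelta ((x*y).right))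
        = Multiplicative.ofAdd ((2:ℤ) • Multiplicative.toAdd x.left - GEdelta x.right) *
          (permAct n x.right) (Multiplicative.ofAdd ((2:ℤ) • Multiplicative.toAdd y.left - GEdelta y.right))
      have h1 : Multiplicative.toAdd ((x*y).left)
          = Multiplicative.toAdd x.left + fun i => Multiplicative.toAdd y.left (x.right⁻¹ i) := rfl
      have h2 : (x*y).right = x.right * y.right := rfl
      have h3 : (permAct n x.right) (Multiplicative.ofAdd ((2:ℤ) • Multiplicative.toAdd y.left - GEdelta y.right))
          = Multiplicative.ofAdd (fun i => ((2:ℤ) • Multiplicative.toAdd y.left - GEdelta y.right) (x.right⁻¹ i)) := rfl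
      rw [h1, h2, h3, GEdelta_mul, ← ofAdd_add]
      congr 1
      funext i
      simp [Pi.add_apply, Pi.sub_apply]
      ring
    · rfl

lemma GEPhi_inj (n : ℕ) : Function.Injective (GEPhi n) := by
  intro x y h
  have hr : x.right = y.right := congrArg (fun z => z.right) h
  have hl : Multiplicative.ofAdd ((2:ℤ) • Multiplicative.toAdd x.left - GEdelta x.right)
      = Multiplicative.ofAdd ((2:ℤ) • Multiplicative.toAdd y.left - GEdelta y.right) :=
    congrArg (fun z => z.left) h
  rw [hr] at hl
  have hl2 : (2:ℤ) • Multiplicative.toAdd x.left - GEdelta y.right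
      = (2:ℤ) • Multiplicative.toAdd y.left - GEdelta y.right := Multiplicative.ofAdd.injective hl
  have hℓ : Multiplicative.toAdd x.left = Multiplicative.toAdd y.left := by
    funext i
    have h3 := congrFun hl2 i
    simp [Pi.sub_apply] at h3
    linarith
  apply SemidirectProduct.ext
  · exact Multiplicative.toAdd.injective hℓ
  · exact hr

lemma lo_ne_hi {n : ℕ} (k : Fin (n - 1)) : lo k ≠ hi k := by
  intro h
  have := congrArg Fin.val h
  simp [lo, hi] at this

lemma GEPhi_ςGen {n : ℕ} (k : Fin (n - 1)) : GEPhi n (ςGen k) = ϖGen k := by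
  apply SemidirectProduct.ext
  · show Multiplicative.ofAdd ((2:ℤ) • (Pi.single (lo k) 1 : Fin n → ℤ)
        - GEdelta (Equiv.swap (lo k) (hi k)))
      = Multiplicative.ofAdd ((Pi.single (lo k) 1 + Pi.single (hi k) 1 : Fin n → ℤ))
    congr 1
    funext i
    have hne := lo_ne_hi k
    by_cases h1 : i = lo k
    · subst h1
      simp [GEdelta, Pi.single_apply, hne, Equiv.swap_apply_left, lo, hi]
    · by_cases h2 : i = hi k
      · subst h2
        simp [GEdelta, Pi.single_apply, hne.symm, Equiv.swap_apply_right, lo, hi]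
      · simp [GEdelta, Pi.single_apply, h1, h2, Equiv.swap_apply_of_ne_of_ne h1 h2]
  · rfl


/-- The kernel of the symmetric Gauss-Epple homomorphism `ϖ` equals the kernel of the
Gauss-Epple homomorphism `ς`. -/
theorem ker_symGE_eq_ker_GE (n : ℕ) (hn : 2 ≤ n)
    (ς : BraidGroup n →* GEGroup n)
    (hς : ∀ k : Fin (n - 1), ς (braidGen k) = ςGen k)
    (ϖ : BraidGroup n →* GEGroup n)
    (hϖ : ∀ k : Fin (n - 1), ϖ (braidGen k) = ϖGen k) :
    ϖ.ker = ς.ker := by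
  have hcomp : (GEPhi n).comp ς = ϖ := by
    apply PresentedGroup.ext
    intro k
    show GEPhi n (ς (braidGen k)) = ϖ (braidGen k)
    rw [hς, hϖ, GEPhi_ςGen]
  ext x
  simp only [MonoidHom.mem_ker, ← hcomp, MonoidHom.comp_apply]
  exact map_eq_one_iff (GEPhi n) (GEPhi_inj n)
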